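/- Let θ be an involutive isometry preserving a root system Φ with Φ^im = {α : θ(α) = α}, and let Φ^{im,c} ⊆ Φ^im be a sub-root system such that whenever α, β ∈ Φ^im with α + β ∈ Φ, the root α + β lies in Φ^{im,c} if and only if either both or neither of α, β lie in Φ^{im,c}. Let ρ^{im,c} be the Weyl vector of a positive system of Φ^{im,c}, choose a positive system Φ^{im,+} of Φ^im for which ρ^{im,c} is dominant, and let B = {α_1,…,α_m} be the simple roots of Φ^{im,+} orthogonal to ρ^{im,c}. Then each α_i lies in Φ^im \ Φ^{im,c}, the α_i are pairwise orthogonal, and B is superorthogonal in Φ^im (the only roots of Φ^im in the span of B are ±α_1,…,±α_m). -/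

import Mathlib

open RealInnerProductSpace

variable {V : Type*} [NormedAddCommGroup V] [InnerProductSpace ℝ V] [FiniteDimensional ℝ V]

/-- The reflection in the hyperplane orthogonal to `α`. -/
noncomputable def sRefl (α : V) : V ≃ₗᵢ[ℝ] V := Submodule.reflection (ℝ ∙ α)ᗮ

/-- A reduced crystallographic root system in a real inner product space. -/
structure IsRootSystem (Ψ : Set V) : Prop where
  finite : Ψ.Finite
  ne_zero : ∀ α ∈ Ψ, α ≠ 0
  neg_mem : ∀ α ∈ Ψ, -α ∈ Ψ
  reduced : ∀ α ∈ Ψ, ∀ t : ℝ, t • α ∈ Ψ → t = 1 ∨ t = -1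
  refl_mem : ∀ α ∈ Ψ, ∀ β ∈ Ψ, sRefl α β ∈ Ψ
  crystallographic : ∀ α ∈ Ψ, ∀ β ∈ Ψ, ∃ n : ℤ, 2 * ⟪β, α⟫ / ⟪α, α⟫ = (n : ℝ)

/-- `P` is a system of positive roots for `Ψ`. -/
structure IsPositiveSystem (Ψ P : Set V) : Prop where
  subset : P ⊆ Ψ
  mem_or_neg_mem : ∀ α ∈ Ψ, α ∈ P ∨ -α ∈ P
  not_neg_mem : ∀ α ∈ P, -α ∉ P
  add_mem : ∀ α ∈ P, ∀ β ∈ P, α + β ∈ Ψ → α + β ∈ P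

/-- `Pi` is a sub-root system of `Ψ`: closed under negation and under addition of roots. -/
def IsSubRootSystem (Ψ Pi : Set V) : Prop :=
  Pi ⊆ Ψ ∧ (∀ α ∈ Pi, -α ∈ Pi) ∧ ∀ α ∈ Pi, ∀ β ∈ Pi, α + β ∈ Ψ → α + β ∈ Pi

/-- `Δ` is a base (system of simple roots) of `Ψ`. -/
structure IsBase (Ψ : Set V) (Δ : Finset V) : Prop where
  subset : ↑Δ ⊆ Ψ
  indep : LinearIndependent ℝ (fun α : Δ => (α : V))
  decomp : ∀ β ∈ Ψ, ∃ c : V → ℤ, β = ∑ α ∈ Δ, (c α : ℝ) • α ∧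
    ((∀ α ∈ Δ, 0 ≤ c α) ∨ (∀ α ∈ Δ, c α ≤ 0))

/-- The Weyl group of `Ψ`: the subgroup of linear isometries generated by root reflections. -/
noncomputable def weylGroup (Ψ : Set V) : Subgroup (V ≃ₗᵢ[ℝ] V) :=
  Subgroup.closure {g | ∃ α ∈ Ψ, g = sRefl α}

/-- `w` commutes with `θ` as a map on `V`. -/
def commutesWith (θ w : V ≃ₗᵢ[ℝ] V) : Prop := ∀ x : V, θ (w x) = w (θ x)


/-! Since `ρ^{im,c}` is (half) the sum of the positive compact roots, it pairs strictly
positively with each of them, so no compact root is orthogonal to it. Two roots `α ≠ ±β` of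
`Φ^im` orthogonal to `ρ^{im,c}` are therefore orthogonal: otherwise `α + β` or `α - β` is a root
of `Φ^im`, compact by the grading, yet still orthogonal to `ρ^{im,c}`. A root in the span of `B`
is orthogonal to `ρ^{im,c}` and pairs nontrivially with some element of `B`, hence is that
element up to sign. -/

section

omit [FiniteDimensional ℝ V]

lemma sRefl_apply (α x : V) : sRefl α x = x - (2 * ⟪x, α⟫ / ⟪α, α⟫) • α := by
  rw [sRefl, Submodule.reflection_orthogonal_apply, Submodule.reflection_singleton_apply,
    RCLike.ofReal_real_eq_id, id, ← real_inner_self_eq_norm_sq, real_inner_comm]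
  module

lemma sRefl_apply_of_inner {α x : V} {c : ℝ} (hc : 2 * ⟪x, α⟫ = c * ⟪α, α⟫) :
    sRefl α x = x - c • α := by
  rcases eq_or_ne α 0 with rfl | hα
  · simp [sRefl_apply]
  rw [sRefl_apply, hc, mul_div_cancel_right₀ _ (inner_self_ne_zero.2 hα)]

lemma sRefl_self (α : V) : sRefl α α = -α :=
  Submodule.reflection_orthogonalComplement_singleton_eq_neg α

lemma sRefl_sRefl (α x : V) : sRefl α (sRefl α x) = x :=
  Submodule.reflection_reflection _ x

lemma inner_sRefl_right (α x : V) : ⟪α, sRefl α x⟫ = -⟪α, x⟫ := by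
  have := (sRefl α).inner_map_map α x
  rw [sRefl_self, inner_neg_left] at this
  linarith

variable {Φ : Set V}

namespace IsRootSystem

lemma exists_nat_of_inner_neg (hΦ : IsRootSystem Φ) {α β : V} (hα : α ∈ Φ) (hβ : β ∈ Φ)
    (hαβ : ⟪α, β⟫ < 0) : ∃ k : ℕ, 0 < k ∧ 2 * ⟪α, β⟫ = -k * ⟪β, β⟫ := by
  have hββ : 0 < ⟪β, β⟫ := real_inner_self_pos.2 (hΦ.ne_zero β hβ)
  obtain ⟨n, hn⟩ := hΦ.crystallographic β hβ α hα
  rw [div_eq_iff hββ.ne'] at hn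
  have hn0 : n < 0 := by
    have : (n : ℝ) < 0 := by nlinarith
    exact_mod_cast this
  obtain ⟨k, rfl⟩ := Int.exists_eq_neg_ofNat hn0.le
  exact ⟨k, by omega, by push_cast at hn; linarith⟩

lemma add_mem_of_inner_neg (hΦ : IsRootSystem Φ) {α β : V} (hα : α ∈ Φ) (hβ : β ∈ Φ)
    (hαβ : ⟪α, β⟫ < 0) (hne : α + β ≠ 0) : α + β ∈ Φ := by
  obtain ⟨k, hk0, hk⟩ := hΦ.exists_nat_of_inner_neg hα hβ hαβ
  obtain ⟨l, hl0, hl⟩ := hΦ.exists_nat_of_inner_neg hβ hα (by rwa [real_inner_comm])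
  rcases (show k = 1 ∨ l = 1 ∨ (2 ≤ k ∧ 2 ≤ l) by omega) with rfl | rfl | ⟨hk2, hl2⟩
  · simpa [sRefl_apply_of_inner hk] using hΦ.refl_mem β hβ α hα
  · simpa [sRefl_apply_of_inner hl, add_comm] using hΦ.refl_mem α hα β hβ
  -- both Cartan integers are at most `-2`, which forces `‖α + β‖² ≤ 0`
  refine absurd (real_inner_self_nonpos.1 ?_) hne
  have hk2' : (2 : ℝ) ≤ k := by exact_mod_cast hk2
  have hl2' : (2 : ℝ) ≤ l := by exact_mod_cast hl2
  rw [inner_add_add_self, real_inner_comm α β] at *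
  nlinarith [mul_le_mul_of_nonneg_right hk2' (real_inner_self_nonneg (x := β)),
    mul_le_mul_of_nonneg_right hl2' (real_inner_self_nonneg (x := α))]

lemma add_smul_mem_of_le (hΦ : IsRootSystem Φ) {β γ : V} (hβ : β ∈ Φ) (hγ : γ ∈ Φ)
    (hγβ : γ ≠ -β) {k : ℕ} (hk : 2 * ⟪γ, β⟫ = -k * ⟪β, β⟫) :
    ∀ j ≤ k, γ + (j : ℝ) • β ∈ Φ := by
  intro j
  induction j using Nat.strong_induction_on with
  | _ j ih =>
  intro hjk
  rcases j with _ | i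
  · simpa using hγ
  by_cases hi : 2 * i < k
  · have hneg : ⟪γ + (i : ℝ) • β, β⟫ < 0 := by
      have hββ : 0 < ⟪β, β⟫ := real_inner_self_pos.2 (hΦ.ne_zero β hβ)
      have hi' : (2 * i : ℝ) < k := by exact_mod_cast hi
      rw [inner_add_left, real_inner_smul_left]
      nlinarith
    have hne : γ + (i : ℝ) • β + β ≠ 0 := by
      intro h
      have hγ' : γ = (-(i + 1) : ℝ) • β := by
        rw [← sub_eq_zero, ← h]; module
      rcases hΦ.reduced β hβ _ (hγ' ▸ hγ) with h1 | h1
      · linarith [(Nat.cast_nonneg i : (0 : ℝ) ≤ i)]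
      · exact hγβ (by rw [hγ', show (i : ℝ) = 0 by linarith]; module)
    have := hΦ.add_mem_of_inner_neg (ih i (by omega) (by omega)) hβ hneg hne
    simpa [add_assoc, add_smul] using this
  -- past the middle of the string, reflect the already known root `γ + (k - i - 1) β`
  have hrefl : 2 * ⟪γ + ((k - (i + 1) : ℕ) : ℝ) • β, β⟫
      = (2 * ((k - (i + 1) : ℕ) : ℝ) - k) * ⟪β, β⟫ := by
    rw [inner_add_left, real_inner_smul_left]
    linarith
  have := hΦ.refl_mem β hβ _ (ih (k - (i + 1)) (by omega) (by omega))
  rw [sRefl_apply_of_inner hrefl, Nat.cast_sub (by omega)] at this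
  convert this using 1
  push_cast
  module

lemma sRefl_mem_of_inner_neg (hΦ : IsRootSystem Φ) {P : Set V} (hPΦ : P ⊆ Φ)
    (hP : ∀ α ∈ P, ∀ β ∈ P, α + β ∈ Φ → α + β ∈ P) {β γ : V} (hβ : β ∈ P) (hγ : γ ∈ P)
    (hγβ : ⟪γ, β⟫ < 0) : sRefl β γ ∈ P := by
  obtain rfl | hγβ' := eq_or_ne γ (-β)
  · rwa [map_neg, sRefl_self, neg_neg]
  obtain ⟨k, -, hk⟩ := hΦ.exists_nat_of_inner_neg (hPΦ hγ) (hPΦ hβ) hγβ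
  have hstring : ∀ j ≤ k, γ + (j : ℝ) • β ∈ P := by
    intro j
    induction j with
    | zero => simpa using hγ
    | succ i ih =>
      intro hi
      have := hP _ (ih (by omega)) β hβ (by
        simpa [add_assoc, add_smul] using
          hΦ.add_smul_mem_of_le (hPΦ hβ) (hPΦ hγ) hγβ' hk (i + 1) hi)
      simpa [add_assoc, add_smul] using this
  simpa [sRefl_apply_of_inner hk] using hstring k le_rfl

end IsRootSystem

lemma isSubRootSystem_fixedPoints (hΦ : IsRootSystem Φ) (θ : V ≃ₗᵢ[ℝ] V) :
    IsSubRootSystem Φ {α ∈ Φ | θ α = α} :=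
  ⟨fun _ hα => hα.1, fun α ⟨hα, hθα⟩ => ⟨hΦ.neg_mem α hα, by rw [map_neg, hθα]⟩,
    fun _ ⟨_, hθα⟩ _ ⟨_, hθβ⟩ h => ⟨h, by rw [map_add, hθα, hθβ]⟩⟩

omit [InnerProductSpace ℝ V] in
lemma IsSubRootSystem.trans {Ψ Ξ : Set V} (h₁ : IsSubRootSystem Φ Ψ)
    (h₂ : IsSubRootSystem Ψ Ξ) : IsSubRootSystem Φ Ξ :=
  ⟨h₂.1.trans h₁.1, h₂.2.1,
    fun α hα β hβ h => h₂.2.2 α hα β hβ (h₁.2.2 α (h₂.1 hα) β (h₂.1 hβ) h)⟩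

namespace IsPositiveSystem

variable {Ψ : Set V} {P : Finset V}

/- Every `γ ∈ P` with `⟪β, γ⟫ < 0` is sent by `sRefl β` to some `γ' ∈ P` with
`⟪β, γ'⟫ = -⟪β, γ⟫`, so the negative terms of `∑ γ ∈ P, ⟪β, γ⟫` are cancelled, while the term
`⟪β, β⟫ > 0` survives. -/
lemma inner_sum_pos (hP : IsPositiveSystem Ψ P) (hΦ : IsRootSystem Φ)
    (hΨ : IsSubRootSystem Φ Ψ) {β : V} (hβ : β ∈ P) : 0 < ⟪β, ∑ γ ∈ P, γ⟫ := by
  classical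
  set N := P.filter (fun γ => ⟪β, γ⟫ < 0)
  set M := N.image (sRefl β)
  have hMP : M ⊆ P := by
    simp only [M, N, Finset.image_subset_iff, Finset.mem_filter]
    refine fun γ ⟨hγ, hβγ⟩ => hΦ.sRefl_mem_of_inner_neg (hP.subset.trans hΨ.1)
      (fun α hα δ hδ h => hP.add_mem α hα δ hδ (hΨ.2.2 α (hP.subset hα) δ (hP.subset hδ) h))
      hβ hγ (by rwa [real_inner_comm])
  have hM_pos : ∀ δ ∈ M, 0 < ⟪β, δ⟫ := by
    simp only [M, N, Finset.mem_image, Finset.mem_filter]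
    rintro _ ⟨γ, ⟨-, hβγ⟩, rfl⟩
    rw [inner_sRefl_right]
    linarith
  have hNM : N ⊆ P \ M := fun γ hγ => by
    simp only [N, Finset.mem_filter] at hγ
    exact Finset.mem_sdiff.2 ⟨hγ.1, fun hM => (hM_pos γ hM).not_gt hγ.2⟩
  have hMN : ∑ δ ∈ M, ⟪β, δ⟫ = -∑ γ ∈ N, ⟪β, γ⟫ := by
    rw [Finset.sum_image fun _ _ _ _ h => (sRefl β).injective h, ← Finset.sum_neg_distrib]
    exact Finset.sum_congr rfl fun γ _ => inner_sRefl_right β γ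
  have hβ_mem : β ∈ (P \ M) \ N := by
    have hββ : 0 < ⟪β, β⟫ := real_inner_self_pos.2 (hΦ.ne_zero β (hΨ.1 (hP.subset hβ)))
    simp only [M, N, Finset.mem_sdiff, Finset.mem_image, Finset.mem_filter, not_exists,
      not_and, not_lt]
    refine ⟨⟨hβ, fun γ hγ h => hP.not_neg_mem β hβ ?_⟩, fun _ => hββ.le⟩
    have := congrArg (sRefl β) h
    rw [sRefl_sRefl, sRefl_self] at this
    exact this ▸ hγ.1
  calc 0 < ⟪β, β⟫ := real_inner_self_pos.2 (hΦ.ne_zero β (hΨ.1 (hP.subset hβ)))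
    _ ≤ ∑ γ ∈ (P \ M) \ N, ⟪β, γ⟫ := Finset.single_le_sum (fun γ hγ => by
        simp only [N, Finset.mem_sdiff, Finset.mem_filter, not_and, not_lt] at hγ
        exact hγ.2 hγ.1.1) hβ_mem
    _ = ∑ γ ∈ P, ⟪β, γ⟫ := by
        rw [← Finset.sum_sdiff hMP, ← Finset.sum_sdiff hNM, hMN]
        ring
    _ = ⟪β, ∑ γ ∈ P, γ⟫ := (inner_sum P _ β).symm

lemma inner_sum_ne_zero (hP : IsPositiveSystem Ψ P) (hΦ : IsRootSystem Φ)
    (hΨ : IsSubRootSystem Φ Ψ) {α : V} (hα : α ∈ Ψ) : ⟪α, ∑ γ ∈ P, γ⟫ ≠ 0 := by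
  rcases hP.mem_or_neg_mem α hα with h | h
  · exact (hP.inner_sum_pos hΦ hΨ h).ne'
  · have := hP.inner_sum_pos hΦ hΨ h
    rw [inner_neg_left] at this
    linarith

end IsPositiveSystem

section Grading

variable {Ψ C : Set V} {ρ : V}

lemma inner_nonneg_of_grading (hΦ : IsRootSystem Φ) (hΨ : IsSubRootSystem Φ Ψ)
    (hgrade : ∀ α ∈ Ψ, ∀ β ∈ Ψ, α + β ∈ Φ → (α + β ∈ C ↔ (α ∈ C ↔ β ∈ C)))
    (hρ : ∀ δ ∈ C, ⟪δ, ρ⟫ ≠ 0) {α β : V} (hα : α ∈ Ψ) (hβ : β ∈ Ψ) (hαρ : ⟪α, ρ⟫ = 0)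
    (hβρ : ⟪β, ρ⟫ = 0) (hne : α + β ≠ 0) : 0 ≤ ⟪α, β⟫ := by
  by_contra! hαβ
  have hsum := hΦ.add_mem_of_inner_neg (hΨ.1 hα) (hΨ.1 hβ) hαβ hne
  have hC : α + β ∈ C := (hgrade α hα β hβ hsum).2
    (iff_of_false (fun h => hρ α h hαρ) (fun h => hρ β h hβρ))
  exact hρ _ hC (by rw [inner_add_left, hαρ, hβρ, add_zero])

lemma inner_eq_zero_of_grading (hΦ : IsRootSystem Φ) (hΨ : IsSubRootSystem Φ Ψ)
    (hgrade : ∀ α ∈ Ψ, ∀ β ∈ Ψ, α + β ∈ Φ → (α + β ∈ C ↔ (α ∈ C ↔ β ∈ C)))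
    (hρ : ∀ δ ∈ C, ⟪δ, ρ⟫ ≠ 0) {α β : V} (hα : α ∈ Ψ) (hβ : β ∈ Ψ) (hαρ : ⟪α, ρ⟫ = 0)
    (hβρ : ⟪β, ρ⟫ = 0) (h₁ : α ≠ β) (h₂ : α ≠ -β) : ⟪α, β⟫ = 0 := by
  have hle := inner_nonneg_of_grading hΦ hΨ hgrade hρ hα (hΨ.2.1 β hβ) hαρ
    (by rw [inner_neg_left, hβρ, neg_zero]) (by rwa [← sub_eq_add_neg, sub_ne_zero])
  rw [inner_neg_right, neg_nonneg] at hle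
  exact le_antisymm hle (inner_nonneg_of_grading hΦ hΨ hgrade hρ hα hβ hαρ hβρ
    fun h => h₂ (eq_neg_of_add_eq_zero_left h))

end Grading

lemma inner_eq_zero_of_mem_span {s : Set V} {x y : V} (hs : ∀ b ∈ s, ⟪y, b⟫ = 0)
    (hx : x ∈ Submodule.span ℝ s) : ⟪y, x⟫ = 0 :=
  Submodule.mem_orthogonal_singleton_iff_inner_right.1 <| Submodule.span_le.2
    (fun b hb => Submodule.mem_orthogonal_singleton_iff_inner_right.2 (hs b hb)) hx

lemma exists_inner_ne_zero_of_mem_span {s : Set V} {x : V} (hx : x ∈ Submodule.span ℝ s)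
    (hx0 : x ≠ 0) : ∃ b ∈ s, ⟪x, b⟫ ≠ 0 := by
  by_contra! h
  exact hx0 (inner_self_eq_zero.1 (inner_eq_zero_of_mem_span h hx))

end

theorem stmt15_general (Φ : Set V) (hΦ : IsRootSystem Φ) (θ : V ≃ₗᵢ[ℝ] V)
    (Φim : Set V) (him : Φim = {α ∈ Φ | θ α = α})
    (Φc : Set V) (hΦcsub : IsSubRootSystem Φim Φc)
    (hgrade : ∀ α ∈ Φim, ∀ β ∈ Φim, α + β ∈ Φ → (α + β ∈ Φc ↔ (α ∈ Φc ↔ β ∈ Φc)))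
    (Pc : Finset V) (hPc : IsPositiveSystem Φc ↑Pc)
    (ρc : V) (hρc : ρc = (2⁻¹ : ℝ) • ∑ β ∈ Pc, β)
    (Pim : Finset V) (hPim : IsPositiveSystem Φim ↑Pim)
    (B : Set V)
    (hB : B = {α : V | α ∈ Pim ∧ (¬ ∃ β ∈ Pim, ∃ γ ∈ Pim, α = β + γ) ∧ ⟪α, ρc⟫ = 0}) :
    (∀ α ∈ B, α ∈ Φim ∧ α ∉ Φc) ∧
    (∀ α ∈ B, ∀ β ∈ B, α ≠ β → ⟪α, β⟫ = 0) ∧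
    (∀ γ ∈ Φim, γ ∈ Submodule.span ℝ B → γ ∈ B ∨ -γ ∈ B) := by
  have hΦim : IsSubRootSystem Φ Φim := him ▸ isSubRootSystem_fixedPoints hΦ θ
  have hρ : ∀ δ ∈ Φc, ⟪δ, ρc⟫ ≠ 0 := fun δ hδ => by
    rw [hρc, real_inner_smul_right]
    exact mul_ne_zero (by norm_num) (hPc.inner_sum_ne_zero hΦ (hΦim.trans hΦcsub) hδ)
  have hB' : ∀ α ∈ B, α ∈ Pim ∧ ⟪α, ρc⟫ = 0 := fun α hα => by
    rw [hB] at hα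
    exact ⟨hα.1, hα.2.2⟩
  have hBim : ∀ α ∈ B, α ∈ Φim := fun α hα => hPim.subset (hB' α hα).1
  have horth : ∀ {α β : V}, α ∈ Φim → β ∈ Φim → ⟪α, ρc⟫ = 0 → ⟪β, ρc⟫ = 0 → α ≠ β → α ≠ -β →
      ⟪α, β⟫ = 0 :=
    inner_eq_zero_of_grading hΦ hΦim hgrade hρ
  refine ⟨fun α hα => ⟨hBim α hα, fun h => hρ α h (hB' α hα).2⟩,
    fun α hα β hβ hne => ?_, fun γ hγ hγB => ?_⟩
  · have hne' : α ≠ -β := fun h => hPim.not_neg_mem β (hB' β hβ).1 (h ▸ (hB' α hα).1)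
    exact horth (hBim α hα) (hBim β hβ) (hB' α hα).2 (hB' β hβ).2 hne hne'
  · have hγρ : ⟪γ, ρc⟫ = 0 := by
      rw [real_inner_comm]
      exact inner_eq_zero_of_mem_span (fun b hb => by rw [real_inner_comm, (hB' b hb).2]) hγB
    obtain ⟨b, hb, hγb⟩ := exists_inner_ne_zero_of_mem_span hγB (hΦ.ne_zero γ (hΦim.1 hγ))
    by_contra! h
    exact hγb <| horth hγ (hBim b hb) hγρ (hB' b hb).2 (by rintro rfl; exact h.1 hb)
      (by rintro rfl; exact h.2 (by rwa [neg_neg]))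

/-- The simple roots of a suitable positive system of `Φ^im` that are orthogonal to
`ρ^{im,c}` are noncompact, pairwise orthogonal, and superorthogonal in `Φ^im`. -/
theorem stmt15 (Φ : Set V) (hΦ : IsRootSystem Φ) (θ : V ≃ₗᵢ[ℝ] V)
    (hinv : ∀ x, θ (θ x) = x) (hΦθ : ⇑θ '' Φ = Φ)
    (Φim : Set V) (him : Φim = {α ∈ Φ | θ α = α})
    (Φc : Set V) (hΦcsub : IsSubRootSystem Φim Φc)
    (hgrade : ∀ α ∈ Φim, ∀ β ∈ Φim, α + β ∈ Φ → (α + β ∈ Φc ↔ (α ∈ Φc ↔ β ∈ Φc)))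
    (Pc : Finset V) (hPc : IsPositiveSystem Φc ↑Pc)
    (ρc : V) (hρc : ρc = (2⁻¹ : ℝ) • ∑ β ∈ Pc, β)
    (Pim : Finset V) (hPim : IsPositiveSystem Φim ↑Pim)
    (hdom : ∀ α ∈ Pim, 0 ≤ ⟪α, ρc⟫)
    (B : Set V)
    (hB : B = {α : V | α ∈ Pim ∧ (¬ ∃ β ∈ Pim, ∃ γ ∈ Pim, α = β + γ) ∧ ⟪α, ρc⟫ = 0}) :
    (∀ α ∈ B, α ∈ Φim ∧ α ∉ Φc) ∧
    (∀ α ∈ B, ∀ β ∈ B, α ≠ β → ⟪α, β⟫ = 0) ∧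
    (∀ γ ∈ Φim, γ ∈ Submodule.span ℝ B → γ ∈ B ∨ -γ ∈ B) :=
  stmt15_general Φ hΦ θ Φim him Φc hΦcsub hgrade Pc hPc ρc hρc Pim hPim B hB
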